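/- There exist constants η > 0 and η' > 0 such that for all x > 0, log(x) - (x - 1) ≤ -ℓ(x), where ℓ(x) = η·|x-1| if |x-1| ≥ 1/2 and ℓ(x) = η'·(x-1)² if |x-1| < 1/2. -/
import Mathlib

/-- log x ≤ 2(√x - 1) for x > 0. -/
lemma log_le_two_sqrt_sub_one {x : ℝ} (hx : 0 < x) :
    Real.log x ≤ 2 * (Real.sqrt x - 1) := by
  have h1 : Real.log (Real.sqrt x) ≤ Real.sqrt x - 1 :=
    Real.log_le_sub_one_of_pos (Real.sqrt_pos.mpr hx)
  rw [Real.log_sqrt hx.le] at h1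
  linarith

/-- Key inequality: there exist η, η' > 0 with
log x - (x-1) ≤ -ℓ(x) for all x > 0, where
ℓ(x) = η|x-1| if |x-1| ≥ 1/2 and η'(x-1)² if |x-1| < 1/2. -/
theorem stmt0 :
    ∃ η > (0 : ℝ), ∃ η' > (0 : ℝ), ∀ x : ℝ, 0 < x →
      Real.log x - (x - 1) ≤
        -(if |x - 1| ≥ 1/2 then η * |x - 1| else η' * (x - 1) ^ 2) := by
  refine ⟨1/10, by norm_num, 1/5, by norm_num, fun x hx => ?_⟩
  have hlog := log_le_two_sqrt_sub_one hx
  set s := Real.sqrt x with hs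
  have hs0 : 0 ≤ s := Real.sqrt_nonneg x
  have hsq : s ^ 2 = x := Real.sq_sqrt hx.le
  by_cases h : |x - 1| ≥ 1/2
  · rw [if_pos h]
    rcases abs_cases (x - 1) with ⟨he, h1⟩ | ⟨he, h1⟩
    · -- x ≥ 3/2
      rw [he] at h ⊢
      nlinarith [sq_nonneg (s - 1), sq_nonneg (3 * s - 11/3)]
    · -- x ≤ 1/2
      rw [he] at h ⊢
      nlinarith [sq_nonneg (s - 1), sq_nonneg (s - 9/11)]
  · rw [if_neg h]
    push_neg at h
    rw [abs_lt] at h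
    nlinarith [sq_nonneg (s - 1), sq_nonneg ((s - 1) * (s + 1))]
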